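/- Let m and n be cardinals with 1 < m < n and let λ > 0. Then 2·d_GH(λΔ_n, λΔ_m) = λ, and the metric segment [λΔ_n, λΔ_m] cannot be extended beyond λΔ_m: there is no metric space Z with d_GH(λΔ_m, Z) > 0 and d_GH(λΔ_n, λΔ_m) + d_GH(λΔ_m, Z) = d_GH(λΔ_n, Z) < ∞. -/

import Mathlib

open Metric Set
open scoped ENNReal

/-- A correspondence between `X` and `Y`: a relation whose projections are surjective. -/
def IsCorrespondence {X Y : Type*} (R : Set (X × Y)) : Prop :=
  (∀ x : X, ∃ y : Y, (x, y) ∈ R) ∧ (∀ y : Y, ∃ x : X, (x, y) ∈ R)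

/-- The distortion of a relation `R ⊆ X × Y`. -/
noncomputable def corrDistortion {X Y : Type*} [MetricSpace X] [MetricSpace Y]
    (R : Set (X × Y)) : ℝ≥0∞ :=
  ⨆ p ∈ R, ⨆ q ∈ R, ENNReal.ofReal |dist p.1 q.1 - dist p.2 q.2|

/-- The Gromov–Hausdorff distance between (arbitrary) metric spaces:
half the infimum of distortions of correspondences. -/
noncomputable def ghDist (X Y : Type*) [MetricSpace X] [MetricSpace Y] : ℝ≥0∞ :=
  (⨅ (R : Set (X × Y)) (_ : IsCorrespondence R), corrDistortion R) / 2

/-!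
Since `#M < #N`, every correspondence between `N` and `M` identifies two distinct
points of `N`, so its distortion is at least `λ`; as all distances are `0` or `λ`, it is also at
most `λ`. For the second claim, fix a surjection `f : N → M` and a correspondence `R` between `M`
and `Z` of distortion less than `λ + 2 d_GH(M, Z)`. Pulling `R` back along `f` gives a
correspondence between `N` and `Z` whose distortion is at most `max λ (dis R)`, because `f` is an
isometry off its fibres and the fibres have diameter at most `λ`. Hence
`2 d_GH(N, Z) < λ + 2 d_GH(M, Z) = 2 d_GH(N, M) + 2 d_GH(M, Z)` as soon as `d_GH(M, Z) > 0`.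
-/

lemma isCorrespondence_univ {X Y : Type*} [Nonempty X] [Nonempty Y] :
    IsCorrespondence (univ : Set (X × Y)) :=
  ⟨fun _ => ⟨Classical.arbitrary Y, mem_univ _⟩, fun _ => ⟨Classical.arbitrary X, mem_univ _⟩⟩

lemma IsCorrespondence.comap {X Y Z : Type*} {R : Set (Y × Z)} (hR : IsCorrespondence R)
    {f : X → Y} (hf : Function.Surjective f) : IsCorrespondence {p : X × Z | (f p.1, p.2) ∈ R} := by
  refine ⟨fun x => hR.1 (f x), fun z => ?_⟩
  obtain ⟨y, hy⟩ := hR.2 z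
  obtain ⟨x, rfl⟩ := hf y
  exact ⟨x, hy⟩

section Distortion

variable {X Y Z : Type*} [MetricSpace X] [MetricSpace Y] [MetricSpace Z]

lemma dist_le_of_dist_eq {c : ℝ} (hc : 0 ≤ c) (hX : ∀ x x' : X, x ≠ x' → dist x x' = c)
    (x x' : X) : dist x x' ≤ c := by
  rcases eq_or_ne x x' with rfl | hxx'
  · simpa using hc
  · exact (hX x x' hxx').le

lemma ofReal_abs_dist_sub_dist_le_corrDistortion {R : Set (X × Y)} {p q : X × Y}
    (hp : p ∈ R) (hq : q ∈ R) :
    ENNReal.ofReal |dist p.1 q.1 - dist p.2 q.2| ≤ corrDistortion R :=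
  le_iSup₂_of_le p hp <| le_iSup₂_of_le q hq le_rfl

lemma corrDistortion_le {R : Set (X × Y)} {c : ℝ≥0∞}
    (h : ∀ p ∈ R, ∀ q ∈ R, ENNReal.ofReal |dist p.1 q.1 - dist p.2 q.2| ≤ c) :
    corrDistortion R ≤ c :=
  iSup₂_le fun p hp => iSup₂_le fun q hq => h p hp q hq

lemma corrDistortion_le_of_dist_le {c : ℝ} (hX : ∀ x x' : X, dist x x' ≤ c)
    (hY : ∀ y y' : Y, dist y y' ≤ c) (R : Set (X × Y)) :
    corrDistortion R ≤ ENNReal.ofReal c :=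
  corrDistortion_le fun _ _ _ _ => ENNReal.ofReal_le_ofReal <|
    abs_sub_le_of_nonneg_of_le dist_nonneg (hX _ _) dist_nonneg (hY _ _)

lemma ofReal_le_corrDistortion_of_mk_lt {X Y : Type u} [MetricSpace X] [MetricSpace Y] {c : ℝ}
    (hX : ∀ x x' : X, x ≠ x' → c ≤ dist x x') (hXY : Cardinal.mk Y < Cardinal.mk X)
    {R : Set (X × Y)} (hR : IsCorrespondence R) :
    ENNReal.ofReal c ≤ corrDistortion R := by
  choose g hg using hR.1
  obtain ⟨x, x', hgx, hx⟩ : ∃ x x', g x = g x' ∧ x ≠ x' :=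
    Function.not_injective_iff.mp fun hinj => (Cardinal.mk_le_of_injective hinj).not_gt hXY
  calc ENNReal.ofReal c ≤ ENNReal.ofReal |dist x x' - dist (g x) (g x')| := by
        rw [hgx, dist_self, sub_zero, abs_of_nonneg dist_nonneg]
        exact ENNReal.ofReal_le_ofReal (hX x x' hx)
    _ ≤ corrDistortion R := ofReal_abs_dist_sub_dist_le_corrDistortion (hg x) (hg x')

/-- The bound is a maximum rather than a sum: this is what prevents extending the segment. -/
lemma corrDistortion_comap_le {f : X → Y} {c : ℝ}
    (hf : ∀ x x', f x ≠ f x' → dist x x' = dist (f x) (f x'))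
    (hfib : ∀ x x', f x = f x' → dist x x' ≤ c) (R : Set (Y × Z)) :
    corrDistortion {p : X × Z | (f p.1, p.2) ∈ R} ≤ max (ENNReal.ofReal c) (corrDistortion R) := by
  refine corrDistortion_le fun p hp q hq => ?_
  have hR := ofReal_abs_dist_sub_dist_le_corrDistortion (R := R) hp hq
  by_cases hpq : f p.1 = f q.1
  · rw [hpq, dist_self, zero_sub, abs_neg, abs_of_nonneg dist_nonneg] at hR
    calc ENNReal.ofReal |dist p.1 q.1 - dist p.2 q.2|
        ≤ ENNReal.ofReal (max c (dist p.2 q.2)) := ENNReal.ofReal_le_ofReal <|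
          abs_sub_le_of_nonneg_of_le dist_nonneg ((hfib _ _ hpq).trans (le_max_left _ _))
            dist_nonneg (le_max_right _ _)
      _ ≤ max (ENNReal.ofReal c) (corrDistortion R) := by
          rw [ENNReal.ofReal_max]
          exact max_le_max le_rfl hR
  · rw [hf _ _ hpq]
    exact le_max_of_le_right hR

end Distortion

section GromovHausdorff

variable {X Y Z : Type*} [MetricSpace X] [MetricSpace Y] [MetricSpace Z]

lemma two_mul_ghDist : 2 * ghDist X Y = ⨅ (R : Set (X × Y)) (_ : IsCorrespondence R),
    corrDistortion R :=
  ENNReal.mul_div_cancel two_ne_zero ENNReal.ofNat_ne_top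

lemma two_mul_ghDist_le {R : Set (X × Y)} (hR : IsCorrespondence R) :
    2 * ghDist X Y ≤ corrDistortion R :=
  two_mul_ghDist.trans_le (iInf₂_le R hR)

lemma exists_corrDistortion_lt {a : ℝ≥0∞} (h : 2 * ghDist X Y < a) :
    ∃ R : Set (X × Y), IsCorrespondence R ∧ corrDistortion R < a := by
  rw [two_mul_ghDist] at h
  obtain ⟨R, hR⟩ := iInf_lt_iff.mp h
  obtain ⟨hRc, hRa⟩ := iInf_lt_iff.mp hR
  exact ⟨R, hRc, hRa⟩

lemma two_mul_ghDist_eq_of_mk_lt {X Y : Type u} [MetricSpace X] [MetricSpace Y] [Nonempty Y]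
    {c : ℝ} (hc : 0 ≤ c) (hX : ∀ x x' : X, x ≠ x' → dist x x' = c)
    (hY : ∀ y y' : Y, y ≠ y' → dist y y' = c) (hXY : Cardinal.mk Y < Cardinal.mk X) :
    2 * ghDist X Y = ENNReal.ofReal c := by
  have : Nonempty X := Cardinal.mk_ne_zero_iff.mp ((zero_le).trans_lt hXY).ne'
  refine le_antisymm ?_ ?_
  · exact (two_mul_ghDist_le isCorrespondence_univ).trans
      (corrDistortion_le_of_dist_le (dist_le_of_dist_eq hc hX) (dist_le_of_dist_eq hc hY) _)
  · rw [two_mul_ghDist]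
    exact le_iInf₂ fun R hR =>
      ofReal_le_corrDistortion_of_mk_lt (fun x x' h => (hX x x' h).ge) hXY hR

lemma two_mul_ghDist_lt_of_surjective {f : X → Y} (hfs : Function.Surjective f) {c : ℝ}
    (hc : 0 < c) (hf : ∀ x x', f x ≠ f x' → dist x x' = dist (f x) (f x'))
    (hfib : ∀ x x', f x = f x' → dist x x' ≤ c) (hYZ : 0 < ghDist Y Z) (hYZ' : ghDist Y Z ≠ ⊤) :
    2 * ghDist X Z < ENNReal.ofReal c + 2 * ghDist Y Z := by
  have hc' : 0 < ENNReal.ofReal c := ENNReal.ofReal_pos.mpr hc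
  have hYZ2 : 0 < 2 * ghDist Y Z := ENNReal.mul_pos two_ne_zero hYZ.ne'
  obtain ⟨R, hR, hRlt⟩ : ∃ R : Set (Y × Z), IsCorrespondence R ∧
      corrDistortion R < ENNReal.ofReal c + 2 * ghDist Y Z :=
    exists_corrDistortion_lt <| add_comm (2 * ghDist Y Z) _ ▸
      ENNReal.lt_add_right (ENNReal.mul_ne_top (by simp) hYZ') hc'.ne'
  calc 2 * ghDist X Z ≤ corrDistortion {p : X × Z | (f p.1, p.2) ∈ R} :=
        two_mul_ghDist_le (hR.comap hfs)
    _ ≤ max (ENNReal.ofReal c) (corrDistortion R) := corrDistortion_comap_le hf hfib R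
    _ < ENNReal.ofReal c + 2 * ghDist Y Z :=
        max_lt (ENNReal.lt_add_right ENNReal.ofReal_ne_top hYZ2.ne') hRlt

end GromovHausdorff

/-- for simplexes `λΔ_n` (the space `N`) and `λΔ_m` (the space `M`) with
`1 < m < n` and `λ > 0`, one has `2·d_GH(λΔ_n, λΔ_m) = λ`, and the metric segment
`[λΔ_n, λΔ_m]` cannot be extended beyond `λΔ_m`. -/
theorem stmt18 {N M : Type u} [MetricSpace N] [MetricSpace M]
    (lam : ℝ) (hlam : 0 < lam)
    (hN : ∀ p q : N, p ≠ q → dist p q = lam)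
    (hM : ∀ p q : M, p ≠ q → dist p q = lam)
    (hM1 : 1 < Cardinal.mk M) (hMN : Cardinal.mk M < Cardinal.mk N) :
    2 * ghDist N M = ENNReal.ofReal lam ∧
    ∀ (Z : Type v) [MetricSpace Z] [Nonempty Z],
      ¬ (0 < ghDist M Z ∧ ghDist N M + ghDist M Z = ghDist N Z ∧ ghDist N Z ≠ ⊤) := by
  have : Nonempty M := Cardinal.mk_ne_zero_iff.mp (zero_lt_one.trans hM1).ne'
  have hNM : 2 * ghDist N M = ENNReal.ofReal lam :=
    two_mul_ghDist_eq_of_mk_lt hlam.le hN hM hMN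
  refine ⟨hNM, fun Z _ _ ⟨hMZ, hsum, hNZ⟩ => ?_⟩
  obtain ⟨g⟩ := Cardinal.le_def M N |>.mp hMN.le
  have hf : ∀ p q, Function.invFun g p ≠ Function.invFun g q →
      dist p q = dist (Function.invFun g p) (Function.invFun g q) := fun p q h => by
    rw [hN p q (ne_of_apply_ne _ h), hM _ _ h]
  have hfib : ∀ p q : N, Function.invFun g p = Function.invFun g q → dist p q ≤ lam :=
    fun p q _ => dist_le_of_dist_eq hlam.le hN p q
  have hMZ' : ghDist M Z ≠ ⊤ := ne_top_of_le_ne_top hNZ (hsum ▸ le_add_self)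
  have hlt := two_mul_ghDist_lt_of_surjective (Function.invFun_surjective g.injective) hlam hf
    hfib hMZ hMZ'
  rw [← hNM, ← mul_add, hsum] at hlt
  exact hlt.false
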